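/- arXiv:2512.06945 — 2 statements merged into one kernel-verified Lean document; each statement's English description precedes it below -/
import Mathlib

section
/- Fix integers K > 1 and n ≥ 1, and let α ∈ [K/(n+1), 1). For k = 1,...,K let (S^{(k)}_1, ..., S^{(k)}_n) be real numbers and define V_i = Σ_{k=1}^K S^{(k)}_i. Let Q̂^k denote the ⌈(n+1)(1-α/K)⌉-th order statistic of (S^{(k)}_i)_i and Q̂ the ⌈(n+1)(1-α)⌉-th order statistic of (V_i)_i (assuming these indices are at most n). Then Q̂ ≤ Σ_{k=1}^K Q̂^k. -/
/-- `orderStat f k` is the `k`-th smallest value (0-indexed) of `f 0, ..., f (n-1)`. -/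
noncomputable def orderStat {n : ℕ} (f : Fin n → ℝ) (k : Fin n) : ℝ :=
  f (Tuple.sort f k)

lemma orderStat_le_iff {n : ℕ} (f : Fin n → ℝ) (k : Fin n) (a : ℝ) :
    orderStat f k ≤ a ↔ (k : ℕ) < (Finset.univ.filter (fun i => f i ≤ a)).card := by
  have h := Tuple.lt_card_le_iff_apply_le_of_monotone (f := f ∘ Tuple.sort f) (a := a)
    (Tuple.monotone_sort f) (j := k)
  rw [← Fintype.card_subtype] at h
  have hcard : Fintype.card {i // (f ∘ Tuple.sort f) i ≤ a}
      = Fintype.card {i // f i ≤ a} :=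
    Fintype.card_congr ((Tuple.sort f).subtypeEquiv (fun i => Iff.rfl))
  rw [hcard, Fintype.card_subtype] at h
  exact h.symm

/-- Arithmetic core: `m + K * (n - mk) ≤ n`. -/
lemma stmt5_arith (K n : ℕ) (hK : 1 < K) (hn : 1 ≤ n) (α : ℝ)
    (hαl : (K : ℝ) / ((n : ℝ) + 1) ≤ α) (hαu : α < 1)
    (m mk : ℕ) (hm : m = ⌈((n : ℝ) + 1) * (1 - α)⌉₊)
    (hmk : mk = ⌈((n : ℝ) + 1) * (1 - α / K)⌉₊)
    (hmkn : mk ≤ n) : m + K * (n - mk) ≤ n := by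
  have hn1 : (0 : ℝ) < (n : ℝ) + 1 := by positivity
  have hKpos : (0 : ℝ) < (K : ℝ) := by exact_mod_cast Nat.zero_lt_of_lt hK
  set t : ℝ := ((n : ℝ) + 1) * α with ht
  have htK : (K : ℝ) ≤ t := by
    rw [div_le_iff₀ hn1] at hαl
    nlinarith
  have ht0 : (0 : ℝ) ≤ t := le_trans (by positivity) htK
  set F : ℕ := ⌊t⌋₊ with hF
  have hKF : K ≤ F := Nat.le_floor htK
  have hFt : (F : ℝ) ≤ t := Nat.floor_le ht0
  have htF1 : t < (F : ℝ) + 1 := Nat.lt_floor_add_one t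
  have hFn : F ≤ n := by
    have : t < (n : ℝ) + 1 := by nlinarith
    have := Nat.floor_lt ht0 |>.mpr (by exact_mod_cast this : t < ((n + 1 : ℕ) : ℝ))
    omega
  -- m + F ≤ n + 1
  have hm' : m + F ≤ n + 1 := by
    have h1 : ((n : ℝ) + 1) * (1 - α) ≤ ((n + 1 - F : ℕ) : ℝ) := by
      have : ((n + 1 - F : ℕ) : ℝ) = (n : ℝ) + 1 - F := by
        push_cast [Nat.cast_sub (by omega : F ≤ n + 1)]; ring
      rw [this]; nlinarith
    have h2 : m ≤ n + 1 - F := by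
      rw [hm]
      calc ⌈((n : ℝ) + 1) * (1 - α)⌉₊ ≤ ⌈((n + 1 - F : ℕ) : ℝ)⌉₊ := Nat.ceil_le_ceil h1
        _ = n + 1 - F := Nat.ceil_natCast _
    omega
  -- K * (n+1) ≤ K * mk + F
  have hKmk : K * (n + 1) ≤ K * mk + F := by
    have hle : ((n : ℝ) + 1) * (1 - α / K) ≤ (mk : ℝ) := by rw [hmk]; exact Nat.le_ceil _
    have h3 : (K : ℝ) * ((n : ℝ) + 1) < (K : ℝ) * mk + F + 1 := by
      have hexp : ((n : ℝ) + 1) * (1 - α / K) = ((n : ℝ) + 1) - t / K := by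
        field_simp; ring
      rw [hexp] at hle
      have h4 : (K : ℝ) * (((n : ℝ) + 1) - t / K) ≤ (K : ℝ) * mk :=
        mul_le_mul_of_nonneg_left hle hKpos.le
      have h5 : (K : ℝ) * (((n : ℝ) + 1) - t / K) = (K : ℝ) * ((n : ℝ) + 1) - t := by
        field_simp
      rw [h5] at h4
      linarith
    have : ((K * (n + 1) : ℕ) : ℝ) < ((K * mk + F + 1 : ℕ) : ℝ) := by push_cast; nlinarith
    exact_mod_cast Nat.lt_succ_iff.mp (by exact_mod_cast this)
  have hmul : K * (n - mk) + K * mk = K * n := by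
    rw [← Nat.mul_add]; congr 1; omega
  have hKn1 : K * (n + 1) = K * n + K := by ring
  omega

/-- Empirical quantile upper bound: the `⌈(n+1)(1-α)⌉`-th order statistic of
the sums `V_i = Σ_k S^{(k)}_i` is at most the sum over `k` of the `⌈(n+1)(1-α/K)⌉`-th
order statistics of `(S^{(k)}_i)_i` (indices converted to 0-indexing). -/
theorem stmt5 (K n : ℕ) (hK : 1 < K) (hn : 1 ≤ n) (α : ℝ)
    (hαl : (K : ℝ) / ((n : ℝ) + 1) ≤ α) (hαu : α < 1)
    (S : Fin K → Fin n → ℝ)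
    (m mk : ℕ) (hm : m = ⌈((n : ℝ) + 1) * (1 - α)⌉₊)
    (hmk : mk = ⌈((n : ℝ) + 1) * (1 - α / K)⌉₊)
    (hm1 : 1 ≤ m) (hmn : m ≤ n) (hmk1 : 1 ≤ mk) (hmkn : mk ≤ n) :
    orderStat (fun i => ∑ k, S k i) ⟨m - 1, by omega⟩
      ≤ ∑ k, orderStat (S k) ⟨mk - 1, by omega⟩ := by
  classical
  set Q : Fin K → ℝ := fun k => orderStat (S k) ⟨mk - 1, by omega⟩ with hQ
  set c : ℝ := ∑ k, Q k with hc
  set A : Fin K → Finset (Fin n) := fun k => Finset.univ.filter (fun i => S k i ≤ Q k) with hA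
  have hAcard : ∀ k, mk ≤ (A k).card := by
    intro k
    have h := (orderStat_le_iff (S k) ⟨mk - 1, by omega⟩ (Q k)).mp le_rfl
    have h' : mk - 1 < (Finset.univ.filter (fun i => S k i ≤ Q k)).card := h
    simp only [hA]
    omega
  set B : Finset (Fin n) := Finset.univ.biUnion (fun k => Finset.univ \ A k) with hB
  have hBcard : B.card ≤ K * (n - mk) := by
    calc B.card ≤ ∑ k : Fin K, (Finset.univ \ A k).card := Finset.card_biUnion_le
      _ ≤ ∑ _k : Fin K, (n - mk) := by
          refine Finset.sum_le_sum fun k _ => ?_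
          have h1 : (Finset.univ \ A k).card = n - (A k).card := by
            rw [Finset.card_sdiff_of_subset (Finset.subset_univ _), Finset.card_univ, Fintype.card_fin]
          have := hAcard k
          omega
      _ = K * (n - mk) := by rw [Finset.sum_const, Finset.card_univ, Fintype.card_fin,
            smul_eq_mul]
  have hsub : Finset.univ \ B ⊆ Finset.univ.filter (fun i => (∑ k, S k i) ≤ c) := by
    intro i hi
    simp only [hB, Finset.mem_sdiff, Finset.mem_biUnion, Finset.mem_univ, true_and,
      not_exists] at hi
    refine Finset.mem_filter.mpr ⟨Finset.mem_univ _, ?_⟩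
    refine Finset.sum_le_sum fun k _ => ?_
    have hik : i ∈ A k := not_not.mp (hi k)
    exact (Finset.mem_filter.mp hik).2
  have harith : m + K * (n - mk) ≤ n := stmt5_arith K n hK hn α hαl hαu m mk hm hmk hmkn
  have hfilter : m ≤ (Finset.univ.filter (fun i => (∑ k, S k i) ≤ c)).card := by
    have h1 : n - B.card ≤ (Finset.univ.filter (fun i => (∑ k, S k i) ≤ c)).card := by
      have := Finset.card_le_card hsub
      rw [Finset.card_sdiff_of_subset (Finset.subset_univ _), Finset.card_univ, Fintype.card_fin] at this
      omega
    omega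
  have := (orderStat_le_iff (fun i => ∑ k, S k i) ⟨m - 1, by omega⟩ c).mpr (by
    simpa using Nat.lt_of_lt_of_le (by omega : m - 1 < m) hfilter)
  exact this
end

section
/- Let F_1, ..., F_{n+1} be exchangeable real random variables, almost surely pairwise distinct, and let α ∈ (0,1) with k = ⌈(n+1)(1-α)⌉ ≤ n. Then P(F_{n+1} ≤ F_{(k)}) = k/(n+1) ≥ 1 - α, where F_{(k)} is the k-th order statistic of (F_1, ..., F_n). -/
open MeasureTheory ENNReal Finset

/-- number of indices `i` with `g i < g j` -/
noncomputable def cnt {m : ℕ} (j : Fin m) (g : Fin m → ℝ) : ℕ :=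
  ∑ i : Fin m, if g i < g j then 1 else 0

lemma cnt_measurable {m : ℕ} (j : Fin m) : Measurable (cnt j) := by
  apply Finset.measurable_sum
  intro i _
  exact Measurable.ite
    (measurableSet_lt (measurable_pi_apply i) (measurable_pi_apply j))
    measurable_const measurable_const

lemma cnt_comp_perm {m : ℕ} (π : Equiv.Perm (Fin m)) (j : Fin m) (g : Fin m → ℝ) :
    cnt j (fun i => g (π i)) = cnt (π j) g := by
  unfold cnt
  exact Equiv.sum_comp π (fun i => if g i < g (π j) then 1 else 0)

lemma cnt_lt_cnt {m : ℕ} {j j' : Fin m} {g : Fin m → ℝ} (h : g j < g j') :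
    cnt j g < cnt j' g := by
  unfold cnt
  apply Finset.sum_lt_sum
  · intro i _
    split_ifs with h1 h2
    · omega
    · exact absurd (h1.trans h) h2
    · omega
    · omega
  · refine ⟨j, Finset.mem_univ _, ?_⟩
    rw [if_neg (lt_irrefl _), if_pos h]
    omega

lemma cnt_lt {m : ℕ} (j : Fin m) (g : Fin m → ℝ) : cnt j g < m := by
  have h1 : cnt j g = (univ.filter (fun i : Fin m => g i < g j)).card :=
    (Finset.card_filter _ _).symm
  have hsub : (univ.filter (fun i : Fin m => g i < g j)) ⊆ univ.erase j := by
    intro i hi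
    simp only [Finset.mem_filter, Finset.mem_univ, true_and] at hi
    refine Finset.mem_erase.2 ⟨fun hij => ?_, Finset.mem_univ _⟩
    exact absurd (hij ▸ hi) (lt_irrefl _)
  have h2 := Finset.card_le_card hsub
  rw [Finset.card_erase_of_mem (Finset.mem_univ j), Finset.card_univ, Fintype.card_fin] at h2
  have := j.isLt
  omega

/-- key order lemma -/
lemma key_order {n : ℕ} (f : Fin n → ℝ) (x : ℝ) (k : ℕ) (hk1 : 1 ≤ k) (hkn : k ≤ n) :
    x ≤ orderStat f ⟨k - 1, by omega⟩ ↔ (∑ i : Fin n, if f i < x then 1 else 0) < k := by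
  set σ := Tuple.sort f
  have hmono : Monotone (f ∘ σ) := Tuple.monotone_sort f
  have hsum : (∑ i : Fin n, if f i < x then 1 else 0)
      = (univ.filter (fun i : Fin n => f (σ i) < x)).card := by
    rw [Finset.card_filter]
    exact (Equiv.sum_comp σ (fun i => if f i < x then 1 else 0)).symm
  have hos : orderStat f ⟨k - 1, by omega⟩ = f (σ ⟨k - 1, by omega⟩) := rfl
  rw [hsum, hos]
  constructor
  · intro hx
    have hcard : (univ.filter (fun i : Fin n => f (σ i) < x)).card
        ≤ (Finset.range (k-1)).card := by
      apply Finset.card_le_card_of_injOn (fun i => i.val)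
      · intro i hi
        simp only [Finset.mem_coe, Finset.mem_filter, Finset.mem_univ, true_and] at hi
        rw [Finset.mem_coe, Finset.mem_range]
        by_contra hcon
        push_neg at hcon
        have h2 : (⟨k-1, by omega⟩ : Fin n) ≤ i := hcon
        exact absurd hi (not_lt.2 (hx.trans (hmono h2)))
      · exact fun a _ b _ h => Fin.val_injective h
    rw [Finset.card_range] at hcard
    omega
  · intro hc
    by_contra hx
    push_neg at hx
    have hcard : (Finset.range k).card
        ≤ (univ.filter (fun i : Fin n => f (σ i) < x)).card := by
      apply Finset.card_le_card_of_injOn (fun r => (⟨r % n, Nat.mod_lt _ (by omega)⟩ : Fin n))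
      · intro r hr
        rw [Finset.mem_coe, Finset.mem_range] at hr
        have hrn : r % n = r := Nat.mod_eq_of_lt (lt_of_lt_of_le hr hkn)
        simp only [Finset.mem_coe, Finset.mem_filter, Finset.mem_univ, true_and]
        refine lt_of_le_of_lt ?_ hx
        have : (⟨r % n, Nat.mod_lt _ (by omega)⟩ : Fin n) ≤ ⟨k-1, by omega⟩ := by
          simp [Fin.le_def, hrn]; omega
        exact hmono this
      · intro a ha b hb hab
        simp only [Finset.mem_coe, Finset.mem_range] at ha hb
        have : a % n = b % n := congrArg Fin.val hab
        rwa [Nat.mod_eq_of_lt (by omega), Nat.mod_eq_of_lt (by omega)] at this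
    rw [Finset.card_range] at hcard
    omega

/-- For exchangeable, a.s. pairwise distinct `F 1, ..., F (n+1)` and
`k = ⌈(n+1)(1-α)⌉ ≤ n`, we have `P(F_{n+1} ≤ F_{(k)}) = k/(n+1) ≥ 1 - α`, where
`F_{(k)}` is the `k`-th order statistic of the first `n` variables. -/
theorem stmt8 {Ω : Type*} [MeasurableSpace Ω] (P : Measure Ω) [IsProbabilityMeasure P]
    (n : ℕ) (hn : 1 ≤ n) (F : Fin (n + 1) → Ω → ℝ) (hmeas : ∀ i, Measurable (F i))
    (hexch : ∀ π : Equiv.Perm (Fin (n + 1)),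
      P.map (fun ω i => F (π i) ω) = P.map (fun ω i => F i ω))
    (hdist : ∀ i j, i ≠ j → P {ω | F i ω = F j ω} = 0)
    (α : ℝ) (hα : α ∈ Set.Ioo (0 : ℝ) 1)
    (k : ℕ) (hk : k = ⌈((n : ℝ) + 1) * (1 - α)⌉₊) (hk1 : 1 ≤ k) (hkn : k ≤ n) :
    P {ω | F (Fin.last n) ω
          ≤ orderStat (fun i : Fin n => F i.castSucc ω) ⟨k - 1, by omega⟩}
        = (k : ℝ≥0∞) / ((n : ℝ≥0∞) + 1) ∧
      1 - α ≤ (k : ℝ) / ((n : ℝ) + 1) := by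
  obtain ⟨hα0, hα1⟩ := hα
  constructor
  · -- probability part
    set X : Ω → (Fin (n+1) → ℝ) := fun ω i => F i ω with hXdef
    have hX : Measurable X := measurable_pi_lambda _ hmeas
    have hEmeas : ∀ (j : Fin (n+1)) (r : ℕ), MeasurableSet {ω | cnt j (X ω) = r} :=
      fun j r => hX ((cnt_measurable j) (measurableSet_singleton r))
    -- equal probabilities by exchangeability
    have hEq : ∀ (j : Fin (n+1)) (r : ℕ),
        P {ω | cnt j (X ω) = r} = P {ω | cnt (Fin.last n) (X ω) = r} := by
      intro j r
      have hπ := hexch (Equiv.swap (Fin.last n) j)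
      have hs : MeasurableSet (cnt (Fin.last n) ⁻¹' {r}) :=
        cnt_measurable _ (measurableSet_singleton r)
      have hmeas2 : Measurable (fun ω i => F (Equiv.swap (Fin.last n) j i) ω) :=
        measurable_pi_lambda _ (fun i => hmeas _)
      have h1 := congrArg (fun μ : Measure (Fin (n+1) → ℝ) =>
        μ (cnt (Fin.last n) ⁻¹' {r})) hπ
      rw [Measure.map_apply hmeas2 hs, Measure.map_apply hX hs] at h1
      have h2 : (fun ω i => F (Equiv.swap (Fin.last n) j i) ω) ⁻¹' (cnt (Fin.last n) ⁻¹' {r})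
          = {ω | cnt j (X ω) = r} := by
        ext ω
        simp only [Set.mem_preimage, Set.mem_singleton_iff, Set.mem_setOf_eq]
        rw [show (fun i => F (Equiv.swap (Fin.last n) j i) ω)
            = (fun i => X ω (Equiv.swap (Fin.last n) j i)) from rfl,
          cnt_comp_perm, Equiv.swap_apply_left]
      have h3 : X ⁻¹' (cnt (Fin.last n) ⁻¹' {r}) = {ω | cnt (Fin.last n) (X ω) = r} := rfl
      rw [h2, h3] at h1
      exact h1
    -- the a.s. distinctness set
    set D : Set Ω := {ω | ∀ i j : Fin (n+1), i ≠ j → F i ω ≠ F j ω} with hDdef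
    have hDeq : D = ⋂ (i : Fin (n+1)), ⋂ (j : Fin (n+1)), ⋂ (_ : i ≠ j),
        {ω | F i ω = F j ω}ᶜ := by
      ext ω
      simp [hDdef, Set.mem_iInter]
    have hDm : MeasurableSet D := by
      rw [hDeq]
      exact MeasurableSet.iInter fun i => MeasurableSet.iInter fun j =>
        MeasurableSet.iInter fun _ => (measurableSet_eq_fun (hmeas i) (hmeas j)).compl
    have hDc : P Dᶜ = 0 := by
      rw [hDeq]
      simp only [Set.compl_iInter, compl_compl]
      exact measure_iUnion_null fun i => measure_iUnion_null fun j =>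
        measure_iUnion_null fun h => hdist i j h
    have hD1 : P D = 1 := (prob_compl_eq_zero_iff hDm).1 hDc
    -- each rank event has probability 1/(n+1)
    have hne0 : ((n:ℝ≥0∞)+1) ≠ 0 := by simp
    have hnetop : ((n:ℝ≥0∞)+1) ≠ ⊤ := by
      exact ENNReal.add_ne_top.2 ⟨ENNReal.natCast_ne_top n, ENNReal.one_ne_top⟩
    have hval : ∀ r : ℕ, P {ω | cnt (Fin.last n) (X ω) = r} = ((n : ℝ≥0∞) + 1)⁻¹ ∨
        ¬ r < n + 1 := by
      intro r
      by_cases hr : r < n + 1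
      swap
      · exact Or.inr hr
      left
      have hdisj : Pairwise (Function.onFun Disjoint
          (fun j : Fin (n+1) => {ω | cnt j (X ω) = r} ∩ D)) := by
        intro j j' hjj'
        rw [Function.onFun, Set.disjoint_left]
        rintro ω ⟨hj, hωD⟩ ⟨hj', _⟩
        have hne : F j ω ≠ F j' ω := hωD j j' hjj'
        rcases lt_or_gt_of_ne hne with h | h
        · have := cnt_lt_cnt (g := X ω) h
          simp only [Set.mem_setOf_eq] at hj hj'
          omega
        · have := cnt_lt_cnt (g := X ω) h
          simp only [Set.mem_setOf_eq] at hj hj'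
          omega
      have hcover : D ⊆ ⋃ j, ({ω | cnt j (X ω) = r} ∩ D) := by
        intro ω hω
        have hinj : Function.Injective
            (fun j : Fin (n+1) => (⟨cnt j (X ω), cnt_lt j (X ω)⟩ : Fin (n+1))) := by
          intro j j' hjj
          by_contra hne
          have hFne : F j ω ≠ F j' ω := hω j j' hne
          have hv : cnt j (X ω) = cnt j' (X ω) := congrArg Fin.val hjj
          rcases lt_or_gt_of_ne hFne with h | h
          · exact absurd hv (cnt_lt_cnt (g := X ω) h).ne
          · exact absurd hv.symm (cnt_lt_cnt (g := X ω) h).ne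
        obtain ⟨j, hj⟩ := (Finite.injective_iff_surjective.mp hinj) ⟨r, hr⟩
        exact Set.mem_iUnion.2 ⟨j, ⟨congrArg Fin.val hj, hω⟩⟩
      have hunion : (⋃ j, ({ω | cnt j (X ω) = r} ∩ D)) = D :=
        subset_antisymm (Set.iUnion_subset fun j => Set.inter_subset_right) hcover
      have hsum := measure_iUnion (μ := P) hdisj (fun j => (hEmeas j r).inter hDm)
      rw [hunion, hD1, tsum_fintype] at hsum
      have hterm : ∀ j : Fin (n+1), P ({ω | cnt j (X ω) = r} ∩ D)
          = P {ω | cnt (Fin.last n) (X ω) = r} := fun j => by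
        rw [measure_inter_conull hDc, hEq j r]
      rw [Finset.sum_congr rfl (fun j _ => hterm j), Finset.sum_const, Finset.card_univ,
        Fintype.card_fin, nsmul_eq_mul] at hsum
      have hcast : ((n + 1 : ℕ) : ℝ≥0∞) = (n : ℝ≥0∞) + 1 := by push_cast; ring
      rw [hcast] at hsum
      calc P {ω | cnt (Fin.last n) (X ω) = r}
          = ((n:ℝ≥0∞)+1)⁻¹ * (((n:ℝ≥0∞)+1) * P {ω | cnt (Fin.last n) (X ω) = r}) := by
            rw [← mul_assoc, ENNReal.inv_mul_cancel hne0 hnetop, one_mul]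
        _ = ((n:ℝ≥0∞)+1)⁻¹ := by rw [← hsum, mul_one]
    -- rewrite the target event
    have hset : {ω | F (Fin.last n) ω
          ≤ orderStat (fun i : Fin n => F i.castSucc ω) ⟨k - 1, by omega⟩}
        = ⋃ r ∈ Finset.range k, {ω | cnt (Fin.last n) (X ω) = r} := by
      ext ω
      simp only [Set.mem_setOf_eq, Set.mem_iUnion, Finset.mem_range, exists_prop]
      have hcnt : cnt (Fin.last n) (X ω)
          = ∑ i : Fin n, if F i.castSucc ω < F (Fin.last n) ω then 1 else 0 := by
        unfold cnt
        rw [Fin.sum_univ_castSucc]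
        simp [hXdef]
      rw [key_order _ _ k hk1 hkn]
      constructor
      · intro h
        exact ⟨cnt (Fin.last n) (X ω), by rw [hcnt]; exact h, rfl⟩
      · rintro ⟨r, hr, hre⟩
        rw [← hcnt]
        omega
    have hdisj2 : Set.PairwiseDisjoint ↑(Finset.range k)
        (fun r => {ω | cnt (Fin.last n) (X ω) = r}) := by
      intro r _ r' _ hne
      rw [Function.onFun, Set.disjoint_left]
      intro ω h1 h2
      simp only [Set.mem_setOf_eq] at h1 h2
      omega
    rw [hset, measure_biUnion_finset hdisj2 (fun r _ => hEmeas _ r)]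
    have hvals : ∀ r ∈ Finset.range k, P {ω | cnt (Fin.last n) (X ω) = r}
        = ((n : ℝ≥0∞) + 1)⁻¹ := by
      intro r hr
      rw [Finset.mem_range] at hr
      rcases hval r with h | h
      · exact h
      · omega
    rw [Finset.sum_congr rfl hvals, Finset.sum_const, Finset.card_range, nsmul_eq_mul,
      div_eq_mul_inv]
  · -- inequality part
    have hceil := Nat.le_ceil (((n:ℝ)+1) * (1-α))
    rw [← hk] at hceil
    rw [le_div_iff₀ (by positivity : (0:ℝ) < (n:ℝ)+1)]
    linarith
end
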